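/- For every real w > 0, √(2π) · w · e^{w²/2} · (1 − Φ(w)) ≤ (w² + 2)/(w² + 3), where Φ is the standard normal cumulative distribution function. -/

import Mathlib

/-!
Write `g t = exp (-t²/2)`, so that `√(2π) (1 - Φ w) = ∫_w^∞ g`. The function
`R t = g t (t² + 2) / (t³ + 3t)` decreases to `0` with `-R' = g (1 + 6 / (t² (t² + 3)²)) ≥ g`,
hence `∫_w^∞ g ≤ ∫_w^∞ (-R') = R w`, and `w e^{w²/2} R w = (w² + 2) / (w² + 3)`.
-/

noncomputable section

/-- The standard normal cumulative distribution function
`Φ(w) = ∫_{-∞}^w (1/√(2π)) e^{-t²/2} dt`. -/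
def Phi (w : ℝ) : ℝ :=
  ∫ t in Set.Iic w, (1 / Real.sqrt (2 * Real.pi)) * Real.exp (-t ^ 2 / 2)

open Real MeasureTheory Set Filter Topology

lemma setIntegral_Ioi_le_of_le_deriv {f G G' : ℝ → ℝ} {a l : ℝ}
    (hf : IntegrableOn f (Ioi a)) (hderiv : ∀ x ∈ Ici a, HasDerivAt G (G' x) x)
    (hG'_nonneg : ∀ x ∈ Ioi a, 0 ≤ G' x) (hle : ∀ x ∈ Ioi a, f x ≤ G' x)
    (hG : Tendsto G atTop (𝓝 l)) :
    ∫ x in Ioi a, f x ≤ l - G a := by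
  rw [← integral_Ioi_of_hasDerivAt_of_nonneg' hderiv hG'_nonneg hG]
  exact setIntegral_mono_on hf (integrableOn_Ioi_deriv_of_nonneg' hderiv hG'_nonneg hG)
    measurableSet_Ioi hle

lemma integrable_exp_neg_sq_div_two : Integrable fun t : ℝ ↦ exp (-t ^ 2 / 2) := by
  convert integrable_exp_neg_mul_sq (by norm_num : (0 : ℝ) < 1 / 2) using 2 with t
  ring_nf

lemma integral_exp_neg_sq_div_two : ∫ t : ℝ, exp (-t ^ 2 / 2) = √(2 * π) := by
  convert integral_gaussian (1 / 2) using 2 with t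
  · ring_nf
  · ring_nf

lemma one_sub_Phi (w : ℝ) : 1 - Phi w = (√(2 * π))⁻¹ * ∫ t in Ioi w, exp (-t ^ 2 / 2) := by
  have hsqrt : √(2 * π) ≠ 0 := by positivity
  have hsplit := intervalIntegral.integral_Iic_add_Ioi (b := w)
    integrable_exp_neg_sq_div_two.integrableOn integrable_exp_neg_sq_div_two.integrableOn
  rw [integral_exp_neg_sq_div_two] at hsplit
  rw [Phi, integral_const_mul, eq_sub_of_add_eq hsplit]
  field_simp
  ring

lemma tendsto_exp_neg_sq_div_two_atTop : Tendsto (fun t : ℝ ↦ exp (-t ^ 2 / 2)) atTop (𝓝 0) := by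
  have hsq : Tendsto (fun t : ℝ ↦ t ^ 2 / 2) atTop atTop :=
    (tendsto_pow_atTop two_ne_zero).atTop_div_const two_pos
  convert tendsto_exp_neg_atTop_nhds_zero.comp hsq using 2 with t
  simp only [Function.comp_apply, neg_div]

def gaussTailMajorant (t : ℝ) : ℝ :=
  exp (-t ^ 2 / 2) * (t ^ 2 + 2) / (t ^ 3 + 3 * t)

lemma hasDerivAt_neg_gaussTailMajorant {x : ℝ} (hx : 0 < x) :
    HasDerivAt (fun t ↦ -gaussTailMajorant t)
      (exp (-x ^ 2 / 2) * (1 + 6 / (x ^ 2 * (x ^ 2 + 3) ^ 2))) x := by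
  have hgauss : HasDerivAt (fun t : ℝ ↦ exp (-t ^ 2 / 2)) (exp (-x ^ 2 / 2) * (-x)) x := by
    have hexponent : HasDerivAt (fun t : ℝ ↦ -t ^ 2 / 2) (-x) x := by
      refine ((hasDerivAt_pow 2 x).neg.div_const 2).congr_deriv ?_
      ring
    exact hexponent.exp
  have hnum : HasDerivAt (fun t : ℝ ↦ t ^ 2 + 2) (2 * x) x := by
    simpa using (hasDerivAt_pow 2 x).add_const 2
  have hden : HasDerivAt (fun t : ℝ ↦ t ^ 3 + 3 * t) (3 * x ^ 2 + 3) x := by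
    refine ((hasDerivAt_pow 3 x).add ((hasDerivAt_id x).const_mul 3)).congr_deriv ?_
    ring
  refine ((hgauss.mul hnum).div hden (by positivity)).neg.congr_deriv ?_
  simp only [Pi.mul_apply]
  field_simp
  ring

lemma gaussTailMajorant_nonneg {t : ℝ} (ht : 0 ≤ t) : 0 ≤ gaussTailMajorant t := by
  unfold gaussTailMajorant
  positivity

lemma gaussTailMajorant_le_exp {t : ℝ} (ht : 1 ≤ t) : gaussTailMajorant t ≤ exp (-t ^ 2 / 2) := by
  rw [gaussTailMajorant, mul_div_assoc]
  refine mul_le_of_le_one_right (exp_pos _).le ((div_le_one (by positivity)).2 ?_)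
  nlinarith

lemma tendsto_gaussTailMajorant_atTop : Tendsto gaussTailMajorant atTop (𝓝 0) :=
  squeeze_zero' (eventually_ge_atTop 0 |>.mono fun _ ↦ gaussTailMajorant_nonneg)
    (eventually_ge_atTop 1 |>.mono fun _ ↦ gaussTailMajorant_le_exp)
    tendsto_exp_neg_sq_div_two_atTop

lemma integral_Ioi_exp_neg_sq_div_two_le {w : ℝ} (hw : 0 < w) :
    ∫ t in Ioi w, exp (-t ^ 2 / 2) ≤ gaussTailMajorant w := by
  simpa using setIntegral_Ioi_le_of_le_deriv (a := w)
    integrable_exp_neg_sq_div_two.integrableOn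
    (fun x hx ↦ hasDerivAt_neg_gaussTailMajorant (hw.trans_le hx))
    (fun x hx ↦ by have := hw.trans hx; positivity)
    (fun x hx ↦ le_mul_of_one_le_right (exp_pos _).le
      (le_add_of_nonneg_right (by have := hw.trans hx; positivity)))
    tendsto_gaussTailMajorant_atTop.neg

theorem mills_type_bound (w : ℝ) (hw : 0 < w) :
    Real.sqrt (2 * Real.pi) * w * Real.exp (w ^ 2 / 2) * (1 - Phi w) ≤
      (w ^ 2 + 2) / (w ^ 2 + 3) := by
  have hsqrt : √(2 * π) ≠ 0 := by positivity
  calc √(2 * π) * w * exp (w ^ 2 / 2) * (1 - Phi w)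
      = w * exp (w ^ 2 / 2) * ∫ t in Ioi w, exp (-t ^ 2 / 2) := by
        rw [one_sub_Phi]
        field_simp
    _ ≤ w * exp (w ^ 2 / 2) * gaussTailMajorant w := by
        gcongr
        exact integral_Ioi_exp_neg_sq_div_two_le hw
    _ = (w ^ 2 + 2) / (w ^ 2 + 3) := by
        rw [gaussTailMajorant, neg_div, exp_neg]
        field_simp
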